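/- For every even integer N ≥ 2, the rescaled fermionic modes satisfy {η^+_n, η^-_{n'}} = n δ_{n+n',0} for all −N/2 < n, n' < N/2, and {η^+_0, γ^-} = 1 and {η^-_0, γ^+} = −1. -/

import Mathlib

open Matrix Complex BigOperators Finset

noncomputable section

namespace LatticeW

/-- basis states of the chain of `N` spin-1/2 sites -/
abbrev St (N : ℕ) := Fin N → Fin 2
/-- operators on `ℂ^{2^N}` -/
abbrev Op (N : ℕ) := Matrix (St N) (St N) ℂ

def σx : Matrix (Fin 2) (Fin 2) ℂ := !![0, 1; 1, 0]
def σy : Matrix (Fin 2) (Fin 2) ℂ := !![0, -Complex.I; Complex.I, 0]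
def σz : Matrix (Fin 2) (Fin 2) ℂ := !![1, 0; 0, -1]
def σp : Matrix (Fin 2) (Fin 2) ℂ := (1/2 : ℂ) • (σx + Complex.I • σy)
def σm : Matrix (Fin 2) (Fin 2) ℂ := (1/2 : ℂ) • (σx - Complex.I • σy)

/-- the operator acting as `M` on the (0-indexed) site `j` and as the identity
elsewhere; junk value `0` if `j` is out of range. -/
def site (N : ℕ) (j : ℕ) (M : Matrix (Fin 2) (Fin 2) ℂ) : Op N :=
  if h : j < N then
    (fun v w => if ∀ l, l ≠ (⟨j, h⟩ : Fin N) → v l = w l then M (v ⟨j, h⟩) (w ⟨j, h⟩) else 0)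
  else 0

/-- diagonal value of σ^z on a one-site basis state -/
def zval (t : Fin 2) : ℂ := if t = 0 then 1 else -1

/-- Jordan–Wigner creation operator `c_j†` (0-indexed `j`; paper index `j+1`):
`c_j† = i^{j} (∏_{l<j} i σ^z_l) σ^+_j`. -/
def ad (N : ℕ) (j : ℕ) : Op N :=
  Complex.I ^ j •
    (Matrix.diagonal (fun v : St N =>
        ∏ l ∈ Finset.univ.filter (fun l : Fin N => (l : ℕ) < j), (Complex.I * zval (v l)))
      * site N j σp)

/-- Jordan–Wigner annihilation operator `c_j` (0-indexed `j`):
`c_j = i^{-j} (∏_{l<j} (i σ^z_l)⁻¹) σ^-_j`. -/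
def an (N : ℕ) (j : ℕ) : Op N :=
  (Complex.I ^ j)⁻¹ •
    (Matrix.diagonal (fun v : St N =>
        ∏ l ∈ Finset.univ.filter (fun l : Fin N => (l : ℕ) < j), (Complex.I * zval (v l))⁻¹)
      * site N j σm)

/-- Temperley–Lieb density `e_{j+1}` of the paper (0-indexed `j`). -/
def eTL (N : ℕ) (j : ℕ) : Op N :=
  an N j * ad N (j+1) + an N (j+1) * ad N j
    + Complex.I • (ad N j * an N j - ad N (j+1) * an N (j+1))

/-- the XX Hamiltonian `H = -∑ e_j`. -/
def Hop (N : ℕ) : Op N := -∑ j ∈ Finset.range (N - 1), eTL N j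

/-- `ρ(K) = ⊗_j (i σ^z)`. -/
def Kop (N : ℕ) : Op N := Matrix.diagonal (fun v : St N => ∏ l, (Complex.I * zval (v l)))

/-- `ρ(E) = (∑_{j=1}^N i^j c_j†) ρ(K)` (paper indices). -/
def Eop (N : ℕ) : Op N := (∑ j ∈ Finset.range N, Complex.I ^ (j+1) • ad N j) * Kop N

/-- `ρ(F) = ∑_{j=1}^N i^{j-1} c_j` (paper indices). -/
def Fop (N : ℕ) : Op N := ∑ j ∈ Finset.range N, Complex.I ^ j • an N j

/-- divided power `ρ(e) = ∑_{j1<j2} (-1)^{j1+j2} i^{1-j1-j2} c_{j1}† c_{j2}†` (paper indices). -/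
def sl2e (N : ℕ) : Op N :=
  ∑ j2 ∈ Finset.range N, ∑ j1 ∈ Finset.range j2,
    ((-1 : ℂ) ^ (j1 + j2) * (Complex.I ^ (j1 + j2 + 1))⁻¹) • (ad N j1 * ad N j2)

/-- divided power `ρ(f) = ∑_{j1<j2} i^{j1+j2-1} c_{j1} c_{j2}` (paper indices). -/
def sl2f (N : ℕ) : Op N :=
  ∑ j2 ∈ Finset.range N, ∑ j1 ∈ Finset.range j2,
    (Complex.I ^ (j1 + j2 + 1)) • (an N j1 * an N j2)

/-- `WB^+_{j+1}` of the paper (0-indexed `j`). -/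
def WBp (N : ℕ) (j : ℕ) : Op N :=
  (-1 : ℂ) ^ (j+1) •
    (ad N j * ad N (j+1) + Complex.I • (ad N j * ad N (j+2)) - ad N (j+1) * ad N (j+2))

/-- `WB^0_{j+1}` of the paper (0-indexed `j`). -/
def WB0 (N : ℕ) (j : ℕ) : Op N :=
  (-(1/2) : ℂ) •
    ((1 : Op N) + Complex.I • (ad N j * an N (j+1)) - ad N j * an N (j+2)
      + Complex.I • (ad N (j+1) * an N j) - (2 : ℂ) • (ad N (j+1) * an N (j+1))
      - Complex.I • (ad N (j+1) * an N (j+2)) - ad N (j+2) * an N j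
      - Complex.I • (ad N (j+2) * an N (j+1)))

/-- `WB^-_{j+1}` of the paper (0-indexed `j`). -/
def WBm (N : ℕ) (j : ℕ) : Op N :=
  (-1 : ℂ) ^ j •
    (an N j * an N (j+1) + Complex.I • (an N j * an N (j+2)) - an N (j+1) * an N (j+2))

/-- `WB^α_j` with `α = 0 ↦ +`, `α = 1 ↦ 0`, `α = 2 ↦ -`. -/
def WB (N : ℕ) (α : Fin 3) (j : ℕ) : Op N :=
  match α with
  | 0 => WBp N j
  | 1 => WB0 N j
  | 2 => WBm N j

/-- the Fourier amplitudes `A_k(j)` (both `k` and `j` paper-indexed). -/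
def Afun (N k j : ℕ) : ℂ :=
  (1/2 : ℂ) * (1 + Complex.I * Complex.exp (-(Complex.I * (Real.pi : ℂ) * (k : ℂ) / (N : ℂ))))
      * Complex.exp (Complex.I * (Real.pi : ℂ) * (k : ℂ) * (j : ℂ) / (N : ℂ))
  - (1/2 : ℂ) * (1 + Complex.I * Complex.exp (Complex.I * (Real.pi : ℂ) * (k : ℂ) / (N : ℂ)))
      * Complex.exp (-(Complex.I * (Real.pi : ℂ) * (k : ℂ) * (j : ℂ) / (N : ℂ)))

/-- `θ†_k = ∑_{j=1}^N A_k(j) c_j†` (paper indices). -/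
def θd (N k : ℕ) : Op N := ∑ j ∈ Finset.range N, Afun N k (j+1) • ad N j

/-- `θ_k = -i ∑_{j=1}^N A_k(j) c_j` (paper indices). -/
def θa (N k : ℕ) : Op N := (-Complex.I) • ∑ j ∈ Finset.range N, Afun N k (j+1) • an N j

/-- the normalization `sqrt(n/(N sin(πn/N)))` for `n ≠ 0`, and `1/√π` for `n = 0`. -/
def ηcoef (N : ℕ) (n : ℤ) : ℂ :=
  if n = 0 then ((Real.sqrt Real.pi)⁻¹ : ℝ)
  else ((Real.sqrt ((n : ℝ) / ((N : ℝ) * Real.sin (Real.pi * (n : ℝ) / (N : ℝ)))) : ℝ) : ℂ)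

/-- `η^+_n` -/
def ηp (N : ℕ) (n : ℤ) : Op N := ηcoef N n • θd N ((N : ℤ)/2 + n).toNat

/-- `η^-_n` -/
def ηm (N : ℕ) (n : ℤ) : Op N := ηcoef N n • θa N ((N : ℤ)/2 - n).toNat

/-- coefficient `(N/2 - j + (1-(-1)^j)/2) i^j` (paper index `j`). -/
def γcoef (N j : ℕ) : ℂ :=
  ((N : ℂ)/2 - (j : ℂ) + (1 - (-1 : ℂ)^j)/2) * Complex.I ^ j

/-- the root vector `γ^+`. -/
def γp (N : ℕ) : Op N :=
  (Complex.I * (Real.sqrt Real.pi : ℂ) / (N : ℂ)) •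
    ∑ j ∈ Finset.range N, γcoef N (j+1) • ad N j

/-- the root vector `γ^-`. -/
def γm (N : ℕ) : Op N :=
  (-((Real.sqrt Real.pi : ℂ) / (N : ℂ))) •
    ∑ j ∈ Finset.range N, γcoef N (j+1) • an N j

/-- Kronecker delta -/
def kδ (a b : ℤ) : ℂ := if a = b then 1 else 0

/-- `s(j) = sqrt(sin(πj/N)/j)` with the convention `π/N` at `j = 0`. -/
def sfun (N : ℕ) (j : ℤ) : ℂ :=
  if j = 0 then ((Real.sqrt (Real.pi / (N : ℝ)) : ℝ) : ℂ)
  else ((Real.sqrt (Real.sin (Real.pi * (j : ℝ) / (N : ℝ)) / (j : ℝ)) : ℝ) : ℂ)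

/-- the index range `-N/2+1 ≤ j ≤ N/2-1`. -/
def modeRange (N : ℕ) : Finset ℤ := Finset.Icc (-(N : ℤ)/2 + 1) ((N : ℤ)/2 - 1)

/-- the coefficient appearing in `Ĥ^r_n`. -/
def Hcoef (N : ℕ) (r : ℕ) (n j1 j2 : ℤ) : ℂ :=
  ((Real.cos (Real.pi * ((j1 - j2 : ℤ) : ℝ) / (2 * (N : ℝ))) : ℝ) : ℂ)^r *
      ((-1 : ℂ)^r * kδ (j1 + j2) n + kδ (j1 + j2) (-n))
    - ((Real.sin (Real.pi * ((j1 + j2 : ℤ) : ℝ) / (2 * (N : ℝ))) : ℝ) : ℂ)^r *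
      (kδ (j1 - j2) ((N : ℤ) + n) + kδ (j1 - j2) (-(N : ℤ) - n)
        + (-1 : ℂ)^r * kδ (j1 - j2) ((N : ℤ) - n) + (-1 : ℂ)^r * kδ (j1 - j2) (-(N : ℤ) + n))

/-- the lattice Virasoro mode `Ĥ^r_n`. -/
def Hhat (N : ℕ) (r : ℕ) (n : ℤ) : Op N :=
  ∑ j1 ∈ modeRange N, ∑ j2 ∈ modeRange N,
    (sfun N j1 * sfun N j2 * Hcoef N r n j1 j2) • (ηp N j1 * ηm N j2)

/-- the coefficient `U_{r,n}(j1,j2)`. -/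
def Ucoef (N : ℕ) (r : ℕ) (n j1 j2 : ℤ) : ℂ :=
  ((Real.sin (Real.pi * ((j1 - j2 : ℤ) : ℝ) / (2 * (N : ℝ))) : ℝ) : ℂ)
      * ((Real.cos (Real.pi * ((j1 - j2 : ℤ) : ℝ) / (2 * (N : ℝ))) : ℝ) : ℂ)^r
      * ((-1 : ℂ)^r * kδ (j1 + j2) n + kδ (j1 + j2) (-n))
    + 2 * ((Real.cos (Real.pi * ((j1 + j2 : ℤ) : ℝ) / (2 * (N : ℝ))) : ℝ) : ℂ)
      * ((Real.sin (Real.pi * ((j1 + j2 : ℤ) : ℝ) / (2 * (N : ℝ))) : ℝ) : ℂ)^r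
      * (kδ (j1 - j2) (-(N : ℤ) - n) + (-1 : ℂ)^r * kδ (j1 - j2) (-(N : ℤ) + n))

/-- the lattice W-algebra mode `Ŵ^{α,r}_n` with `α = 0 ↦ +`, `α = 1 ↦ 0`, `α = 2 ↦ -`. -/
def What (N : ℕ) (α : Fin 3) (r : ℕ) (n : ℤ) : Op N :=
  ∑ j1 ∈ modeRange N, ∑ j2 ∈ modeRange N,
    (sfun N j1 * sfun N j2 * Ucoef N r n j1 j2) •
      (match α with
        | 0 => ηp N j1 * ηp N j2
        | 1 => ηp N j1 * ηm N j2 + ηm N j1 * ηp N j2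
        | 2 => ηm N j1 * ηm N j2)

/-- the all-spins-down reference state. -/
def downSt (N : ℕ) : St N → ℂ := fun v => if ∀ j, v j = 1 then 1 else 0

/-- the vacuum `|0⟩ = θ†_{N/2} θ†_{N/2+1} ⋯ θ†_{N-1} |↓…↓⟩`. -/
def vac (N : ℕ) : St N → ℂ :=
  (((List.range (N/2)).map (fun t => θd N (N/2 + t))).prod).mulVec (downSt N)

/-- the logarithmic partner `|0̃⟩ = γ^+ θ†_{N/2+1} ⋯ θ†_{N-1} |↓…↓⟩`. -/
def vacTilde (N : ℕ) : St N → ℂ :=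
  (γp N * (((List.range (N/2 - 1)).map (fun t => θd N (N/2 + 1 + t))).prod)).mulVec (downSt N)

/-- the total spin `S^z = ½ ∑_j σ^z_j`. -/
def Sz (N : ℕ) : Op N := (1/2 : ℂ) • ∑ j ∈ Finset.range N, site N j σz

/- ************ XXZ spin-chain at generic q (statement 19) ************ -/

/-- the single-site diagonal `diag(q, q⁻¹)` evaluated on a basis state. -/
def dq (q : ℂ) : Fin 2 → ℂ := fun t => if t = 0 then q else q⁻¹

/-- the XXZ Temperley–Lieb density `e_{i+1}` of the paper (0-indexed `i`). -/
def eXXZ (N : ℕ) (q : ℂ) (i : ℕ) : Op N :=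
  ((q + q⁻¹)/4) • (1 : Op N)
    - (1/2 : ℂ) • (site N i σx * site N (i+1) σx + site N i σy * site N (i+1) σy)
    - ((q + q⁻¹)/4) • (site N i σz * site N (i+1) σz)
    + ((q - q⁻¹)/4) • (site N i σz - site N (i+1) σz)

/-- the XXZ Hamiltonian with quantum-group symmetric boundary terms. -/
def HXXZ (N : ℕ) (q : ℂ) : Op N :=
  (1/2 : ℂ) • ∑ i ∈ Finset.range (N - 1),
      (site N i σx * site N (i+1) σx + site N i σy * site N (i+1) σy
        + ((q + q⁻¹)/2) • (site N i σz * site N (i+1) σz))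
    - ((q - q⁻¹)/4) • (site N 0 σz - site N (N-1) σz)

/-- `K_N = ⊗_j diag(q,q⁻¹)`. -/
def KXXZ (N : ℕ) (q : ℂ) : Op N := Matrix.diagonal (fun v : St N => ∏ l, dq q (v l))

/-- `E_N = ∑_j σ^+_j ⊗ ∏_{l>j} diag(q,q⁻¹)_l`. -/
def EXXZ (N : ℕ) (q : ℂ) : Op N :=
  ∑ j ∈ Finset.range N,
    site N j σp *
      Matrix.diagonal (fun v : St N =>
        ∏ l ∈ Finset.univ.filter (fun l : Fin N => j < (l : ℕ)), dq q (v l))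

/-- `F_N = ∑_j (∏_{l<j} diag(q⁻¹,q)_l) ⊗ σ^-_j`. -/
def FXXZ (N : ℕ) (q : ℂ) : Op N :=
  ∑ j ∈ Finset.range N,
    Matrix.diagonal (fun v : St N =>
        ∏ l ∈ Finset.univ.filter (fun l : Fin N => (l : ℕ) < j), (dq q (v l))⁻¹) *
      site N j σm

end LatticeW

/-!
The Jordan–Wigner modes satisfy `{c_j, c_k†} = δ_jk`: the string `∏_{l<j} iσ^z_l` anticommutes
with `σ^±_l` for `l < j` and commutes with it otherwise, so for `j ≠ k` the signs picked up by the
two strings are opposite. Hence the anticommutator of two linear combinations of modes is the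
bilinear pairing of their coefficients.

With `w = e^{iπk/N}` one has `2 A_k(j) = u_j + i u_{j-1}`, `u_j = w^j - w^{-j}`, and
`u_0 = u_N = 0`. In `∑_j A_k(j) A_{k'}(j)` the terms `u_j u'_j` telescope away and the rest are
Laurent sums `∑_{m=1-N}^{N} x^m` over `x = e^{iπ(k ± k')/N}`, which vanish unless `x = 1`. So the
`θ`-modes are orthogonal, `{θ_k†, θ_k} = -N cos(πk/N) = N sin(πn/N)` for `k = N/2 + n`, and the
normalisation of `η^±_n` turns this into `n`. At `k = N/2` the amplitudes are `A_{N/2}(j) = i^j`,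
and pairing them with the coefficients of `γ^∓` gives an alternating sum equal to `-N`.
-/

namespace Matrix

variable {ι α R : Type*} [Fintype ι] [CommSemiring R]

def piKronecker (A : ι → Matrix α α R) : Matrix (ι → α) (ι → α) R :=
  Matrix.of fun v w => ∏ i, A i (v i) (w i)

theorem piKronecker_mul [DecidableEq ι] [Fintype α] (A B : ι → Matrix α α R) :
    piKronecker A * piKronecker B = piKronecker (A * B) := by
  ext v w
  simp only [piKronecker, mul_apply, of_apply, Pi.mul_apply, Fintype.prod_sum,
    Finset.prod_mul_distrib]

theorem piKronecker_one [DecidableEq α] : piKronecker (1 : ι → Matrix α α R) = 1 := by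
  ext v w
  simp only [piKronecker, of_apply, Pi.one_apply, one_apply, Fintype.prod_boole, funext_iff]

end Matrix

namespace LatticeW

variable {N : ℕ}

theorem site_apply {j : ℕ} (hj : j < N) (M : Matrix (Fin 2) (Fin 2) ℂ) (v w : St N) :
    site N j M v w =
      if ∀ l, l ≠ (⟨j, hj⟩ : Fin N) → v l = w l then M (v ⟨j, hj⟩) (w ⟨j, hj⟩) else 0 := by
  have h : site N j M = ((fun v w => if ∀ l, l ≠ (⟨j, hj⟩ : Fin N) → v l = w l then
      M (v ⟨j, hj⟩) (w ⟨j, hj⟩) else 0) : Op N) := dif_pos hj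
  rw [h]

theorem site_eq_piKronecker {j : ℕ} (hj : j < N) (M : Matrix (Fin 2) (Fin 2) ℂ) :
    site N j M = piKronecker (Pi.mulSingle ⟨j, hj⟩ M) := by
  ext v w
  rw [site_apply hj, piKronecker, of_apply, Fintype.prod_eq_mul_prod_compl ⟨j, hj⟩,
    Pi.mulSingle_eq_same, Finset.prod_congr rfl (g := fun l => if v l = w l then (1 : ℂ) else 0)
      fun l hl => by rw [Pi.mulSingle_eq_of_ne (by simpa using hl), Matrix.one_apply],
    Finset.prod_boole]
  simp only [Finset.mem_compl, Finset.mem_singleton]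
  split_ifs <;> simp

theorem site_mul_site {j : ℕ} (hj : j < N) (M M' : Matrix (Fin 2) (Fin 2) ℂ) :
    site N j M * site N j M' = site N j (M * M') := by
  rw [site_eq_piKronecker hj, site_eq_piKronecker hj, site_eq_piKronecker hj, piKronecker_mul,
    Pi.mulSingle_mul]

theorem site_commute {j k : ℕ} (hj : j < N) (hk : k < N) (hjk : j ≠ k)
    (M M' : Matrix (Fin 2) (Fin 2) ℂ) : Commute (site N j M) (site N k M') := by
  have hne : (⟨j, hj⟩ : Fin N) ≠ ⟨k, hk⟩ := fun h => hjk (Fin.mk.inj h)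
  rw [site_eq_piKronecker hj, site_eq_piKronecker hk, Commute, SemiconjBy, piKronecker_mul,
    piKronecker_mul]
  exact congrArg _ (Pi.mulSingle_commute (f := fun _ => Matrix (Fin 2) (Fin 2) ℂ) hne M M').eq

theorem site_one {j : ℕ} (hj : j < N) : site N j 1 = 1 := by
  rw [site_eq_piKronecker hj, Pi.mulSingle_one, piKronecker_one]

theorem site_add {j : ℕ} (hj : j < N) (M M' : Matrix (Fin 2) (Fin 2) ℂ) :
    site N j (M + M') = site N j M + site N j M' := by
  ext v w
  simp only [Matrix.add_apply, site_apply hj]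
  split_ifs <;> simp

theorem site_mul_diagonal {j : ℕ} (hj : j < N) (M : Matrix (Fin 2) (Fin 2) ℂ) (d : St N → ℂ)
    (ε : ℂ) (hd : ∀ v w : St N, (∀ l, l ≠ (⟨j, hj⟩ : Fin N) → v l = w l) →
      M (v ⟨j, hj⟩) (w ⟨j, hj⟩) ≠ 0 → d w = ε * d v) :
    site N j M * diagonal d = ε • (diagonal d * site N j M) := by
  ext v w
  rw [Matrix.smul_apply, mul_diagonal, diagonal_mul, site_apply hj, smul_eq_mul]
  split_ifs with hvw
  · by_cases hM : M (v ⟨j, hj⟩) (w ⟨j, hj⟩) = 0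
    · simp [hM]
    · rw [hd v w hvw hM]; ring
  · simp

theorem σm_mul_σp_add_σp_mul_σm : σm * σp + σp * σm = 1 := by
  ext a b
  fin_cases a <;> fin_cases b <;>
    simp [σm, σp, σx, σy] <;> ring_nf

theorem σp_apply_self (t : Fin 2) : σp t t = 0 := by
  fin_cases t <;> simp [σp, σx, σy]

theorem σm_apply_self (t : Fin 2) : σm t t = 0 := by
  fin_cases t <;> simp [σm, σx, σy]

def jwString (N j : ℕ) : St N → ℂ :=
  fun v => ∏ l ∈ Finset.univ.filter (fun l : Fin N => (l : ℕ) < j), Complex.I * zval (v l)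

def jwSign (j k : ℕ) : ℂ := if j < k then -1 else 1

theorem jwSign_self (j : ℕ) : jwSign j j = 1 := by simp [jwSign]

theorem jwSign_swap {j k : ℕ} (h : j ≠ k) : jwSign k j = -jwSign j k := by
  rcases lt_or_gt_of_ne h with h | h <;> simp [jwSign, h, h.not_gt]

theorem jwSign_inv (j k : ℕ) : (jwSign j k)⁻¹ = jwSign j k := by
  unfold jwSign; split_ifs <;> norm_num

theorem ad_eq (j : ℕ) :
    ad N j = Complex.I ^ j • (diagonal (jwString N j) * site N j σp) := rfl

theorem an_eq (j : ℕ) :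
    an N j = (Complex.I ^ j)⁻¹ • (diagonal (fun v => (jwString N j v)⁻¹) * site N j σm) := by
  simp only [an, jwString, Finset.prod_inv_distrib]

theorem jwString_ne_zero (j : ℕ) (v : St N) : jwString N j v ≠ 0 :=
  Finset.prod_ne_zero_iff.2 fun l _ =>
    mul_ne_zero Complex.I_ne_zero (by unfold zval; split_ifs <;> norm_num)

theorem jwString_of_flip {j : ℕ} (hj : j < N) (k : ℕ) {v w : St N}
    (hvw : ∀ l, l ≠ (⟨j, hj⟩ : Fin N) → v l = w l) (hne : v ⟨j, hj⟩ ≠ w ⟨j, hj⟩) :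
    jwString N k w = jwSign j k * jwString N k v := by
  have hzval : zval (w ⟨j, hj⟩) = -zval (v ⟨j, hj⟩) := by
    revert hne; unfold zval
    generalize v ⟨j, hj⟩ = a; generalize w ⟨j, hj⟩ = b
    fin_cases a <;> fin_cases b <;> simp
  by_cases hjk : j < k
  · have hmem : (⟨j, hj⟩ : Fin N) ∈ Finset.univ.filter (fun l : Fin N => (l : ℕ) < k) := by
      simp [hjk]
    rw [jwSign, if_pos hjk, jwString, jwString, ← Finset.mul_prod_erase _ _ hmem,
      ← Finset.mul_prod_erase _ _ hmem, hzval,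
      Finset.prod_congr rfl fun l hl => by rw [← hvw l (Finset.ne_of_mem_erase hl)]]
    ring
  · rw [jwSign, if_neg hjk, one_mul]
    refine Finset.prod_congr rfl fun l hl => ?_
    have hl : (l : ℕ) < k := (Finset.mem_filter.1 hl).2
    rw [hvw l (fun h => by rw [h] at hl; exact hjk hl)]

theorem site_mul_diagonal_jwString {j : ℕ} (hj : j < N) (M : Matrix (Fin 2) (Fin 2) ℂ)
    (hM : ∀ t, M t t = 0) (k : ℕ) :
    site N j M * diagonal (jwString N k) = jwSign j k • (diagonal (jwString N k) * site N j M) :=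
  site_mul_diagonal hj M _ _ fun _ _ hvw hvw' =>
    jwString_of_flip hj k hvw fun h => hvw' (by rw [h, hM])

theorem site_mul_diagonal_jwString_inv {j : ℕ} (hj : j < N) (M : Matrix (Fin 2) (Fin 2) ℂ)
    (hM : ∀ t, M t t = 0) (k : ℕ) :
    site N j M * diagonal (fun v => (jwString N k v)⁻¹)
      = jwSign j k • (diagonal (fun v => (jwString N k v)⁻¹) * site N j M) :=
  site_mul_diagonal hj M _ _ fun _ _ hvw hvw' => by
    rw [jwString_of_flip hj k hvw fun h => hvw' (by rw [h, hM]), mul_inv, jwSign_inv]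

theorem mul_add_mul_eq_of_twisted {A : Type*} [Ring A] [Module ℂ A] [IsScalarTower ℂ A A]
    [SMulCommClass ℂ A A] {a b x y : A} {ε ε' : ℂ} (hx : x * b = ε • (b * x))
    (hy : y * a = ε' • (a * y)) (hab : b * a = a * b) :
    a * x * (b * y) + b * y * (a * x) = a * b * (ε • (x * y) + ε' • (y * x)) := by
  calc a * x * (b * y) + b * y * (a * x) = a * (x * b) * y + b * (y * a) * x := by
        simp only [mul_assoc]
    _ = _ := by
        rw [hx, hy]
        simp only [mul_smul_comm, smul_mul_assoc, mul_add, ← mul_assoc, hab]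

theorem an_mul_ad_add_ad_mul_an {j k : ℕ} (hj : j < N) (hk : k < N) :
    an N j * ad N k + ad N k * an N j = if j = k then 1 else 0 := by
  have hD : diagonal (jwString N k) * diagonal (fun v => (jwString N j v)⁻¹)
      = diagonal (fun v => (jwString N j v)⁻¹) * diagonal (jwString N k) := by
    simp only [diagonal_mul_diagonal, mul_comm]
  rw [an_eq, ad_eq, smul_mul_smul_comm, smul_mul_smul_comm, mul_comm (Complex.I ^ k), ← smul_add,
    mul_add_mul_eq_of_twisted (site_mul_diagonal_jwString hj σm σm_apply_self k)
      (site_mul_diagonal_jwString_inv hk σp σp_apply_self j) hD]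
  split_ifs with hjk
  · subst hjk
    rw [jwSign_self, one_smul, one_smul, site_mul_site hj, site_mul_site hj, ← site_add hj,
      σm_mul_σp_add_σp_mul_σm, site_one hj, mul_one, diagonal_mul_diagonal,
      inv_mul_cancel₀ (pow_ne_zero j Complex.I_ne_zero), one_smul]
    convert diagonal_one with v
    exact inv_mul_cancel₀ (jwString_ne_zero j v)
  · rw [jwSign_swap hjk, (site_commute hj hk hjk σm σp).eq, neg_smul, add_neg_cancel, mul_zero,
      smul_zero]

theorem sum_smul_ad_anticomm_sum_smul_an (f g : ℕ → ℂ) :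
    (∑ j ∈ Finset.range N, f j • ad N j) * (∑ j ∈ Finset.range N, g j • an N j)
      + (∑ j ∈ Finset.range N, g j • an N j) * (∑ j ∈ Finset.range N, f j • ad N j)
    = (∑ j ∈ Finset.range N, f j * g j) • (1 : Op N) := by
  rw [Finset.sum_mul_sum, Finset.sum_mul_sum, Finset.sum_comm (s := Finset.range N)
    (f := fun j k => g j • an N j * (f k • ad N k)), ← Finset.sum_add_distrib, Finset.sum_smul]
  refine Finset.sum_congr rfl fun j hj => ?_
  have hjN := Finset.mem_range.1 hj
  rw [← Finset.sum_add_distrib, Finset.sum_eq_single_of_mem j hj fun k hk hkj => ?_]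
  · rw [smul_mul_smul_comm, smul_mul_smul_comm, mul_comm (g j), ← smul_add, add_comm,
      an_mul_ad_add_ad_mul_an hjN hjN, if_pos rfl]
  · rw [smul_mul_smul_comm, smul_mul_smul_comm, mul_comm (g k), ← smul_add, add_comm,
      an_mul_ad_add_ad_mul_an (Finset.mem_range.1 hk) hjN, if_neg hkj, smul_zero]

def amp (w : ℂ) (j : ℕ) : ℂ := ((1 + I * w⁻¹) * w ^ j - (1 + I * w) * w⁻¹ ^ j) / 2

/-- `∑_{m = 1 - N}^{N} x ^ m`. -/
def laurentGeomSum (N : ℕ) (x : ℂ) : ℂ := ∑ j ∈ range N, (x ^ (j + 1) + x⁻¹ ^ j)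

theorem laurentGeomSum_one (N : ℕ) : laurentGeomSum N 1 = 2 * N := by
  simp [laurentGeomSum]; ring

/-- The sum is `x ^ (1 - N) * (x ^ (2 * N) - 1) / (x - 1)`. -/
theorem laurentGeomSum_eq_zero {N : ℕ} {x : ℂ} (hx : x ≠ 1) (hxN : x ^ (2 * N) = 1) :
    laurentGeomSum N x = 0 := by
  rcases Nat.eq_zero_or_pos N with rfl | hN
  · simp [laurentGeomSum]
  have hx0 : x ≠ 0 := by rintro rfl; simp [hN.ne'] at hxN
  have hinv : x⁻¹ ^ N = x ^ N := by
    rw [inv_pow, inv_eq_of_mul_eq_one_left (by rw [← pow_add, ← two_mul, hxN])]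
  have hx' : x⁻¹ ≠ 1 := inv_ne_one.2 hx
  rw [laurentGeomSum, sum_add_distrib]
  simp only [pow_succ, ← sum_mul]
  rw [geom_sum_eq hx, geom_sum_eq hx', hinv]
  have h1 : x - 1 ≠ 0 := sub_ne_zero.2 hx
  have h2 : x⁻¹ - 1 ≠ 0 := sub_ne_zero.2 hx'
  field_simp
  ring

theorem sum_amp_mul_amp {N : ℕ} {w w' : ℂ} (hw : w ≠ 0) (hw' : w' ≠ 0)
    (hwN : w ^ (2 * N) = 1) :
    ∑ j ∈ range N, amp w (j + 1) * amp w' (j + 1)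
      = I / 4 * ((w⁻¹ + w'⁻¹) * laurentGeomSum N (w * w')
          - (w' + w⁻¹) * laurentGeomSum N (w * w'⁻¹)) := by
  -- `2 * amp w (j + 1) = u (j + 1) + I * u j` with `u j = w ^ j - w⁻¹ ^ j`, and `U = u * u'`.
  set U : ℕ → ℂ := fun j => (w ^ j - w⁻¹ ^ j) * (w' ^ j - w'⁻¹ ^ j)
  have hterm : ∀ j, amp w (j + 1) * amp w' (j + 1) = (U (j + 1) - U j) / 4
      + I / 4 * ((w⁻¹ + w'⁻¹) * ((w * w') ^ (j + 1) + (w * w')⁻¹ ^ j)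
          - (w' + w⁻¹) * ((w * w'⁻¹) ^ (j + 1) + (w * w'⁻¹)⁻¹ ^ j)) := by
    intro j
    simp only [U, amp, pow_succ, mul_pow, inv_pow, mul_inv, inv_inv]
    field_simp
    ring_nf
    rw [I_sq]
    ring
  have hUN : U N = 0 := by
    have hinv : w⁻¹ ^ N = w ^ N := by
      rw [inv_pow, inv_eq_of_mul_eq_one_left (by rw [← pow_add, ← two_mul, hwN])]
    simp only [U, hinv, sub_self, zero_mul]
  rw [sum_congr rfl fun j _ => hterm j, sum_add_distrib, ← sum_div, sum_range_sub, hUN,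
    ← mul_sum, sum_sub_distrib, ← mul_sum, ← mul_sum]
  simp [U, laurentGeomSum]

theorem sum_amp_pow_mul_amp_pow {ζ : ℂ} (hζ : IsPrimitiveRoot ζ (2 * N)) {k k' : ℕ}
    (hk : 0 < k) (hkN : k < N) (hk'N : k' < N) :
    ∑ j ∈ range N, amp (ζ ^ k) (j + 1) * amp (ζ ^ k') (j + 1)
      = if k = k' then -(I * N / 2) * (ζ ^ k + (ζ ^ k)⁻¹) else 0 := by
  have hζ0 : ζ ≠ 0 := hζ.ne_zero (by omega)
  have hpow : ∀ m, (ζ ^ m) ^ (2 * N) = 1 := fun m => by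
    rw [← pow_mul, mul_comm, pow_mul, hζ.pow_eq_one, one_pow]
  rw [sum_amp_mul_amp (pow_ne_zero _ hζ0) (pow_ne_zero _ hζ0) (hpow k), ← pow_add,
    laurentGeomSum_eq_zero (hζ.pow_ne_one_of_pos_of_lt (by omega) (by omega)) (hpow _)]
  split_ifs with hkk
  · subst hkk
    rw [mul_inv_cancel₀ (pow_ne_zero _ hζ0), laurentGeomSum_one]
    ring
  · have hne : ζ ^ k * (ζ ^ k')⁻¹ ≠ 1 := fun h =>
      hkk (hζ.pow_inj (by omega) (by omega) ((mul_inv_eq_one₀ (pow_ne_zero _ hζ0)).1 h))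
    rw [laurentGeomSum_eq_zero hne (by rw [mul_pow, inv_pow, hpow, hpow, inv_one, mul_one])]
    ring

theorem isPrimitiveRoot_exp_pi_mul_I_div (hN : N ≠ 0) :
    IsPrimitiveRoot (exp (Real.pi * I / N)) (2 * N) := by
  convert Complex.isPrimitiveRoot_exp (2 * N) (by omega) using 2
  push_cast
  ring

theorem Afun_eq_amp (N k j : ℕ) : Afun N k j = amp (exp (Real.pi * I / N) ^ k) j := by
  simp only [amp, Afun, ← Complex.exp_neg, ← exp_nat_mul]
  ring_nf

theorem exp_pow_add_inv (N k : ℕ) :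
    exp (Real.pi * I / N) ^ k + (exp (Real.pi * I / N) ^ k)⁻¹
      = 2 * Real.cos (Real.pi * k / N) := by
  rw [← exp_nat_mul, ← Complex.exp_neg, ofReal_cos, two_cos]
  push_cast
  ring_nf

theorem θd_anticomm_θa {k k' : ℕ} (hk : 0 < k) (hkN : k < N) (hk'N : k' < N) :
    θd N k * θa N k' + θa N k' * θd N k
      = (if k = k' then -(N * Real.cos (Real.pi * k / N) : ℂ) else 0) • (1 : Op N) := by
  rw [θd, θa, mul_smul_comm, smul_mul_assoc, ← smul_add, sum_smul_ad_anticomm_sum_smul_an,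
    smul_smul]
  simp only [Afun_eq_amp]
  rw [sum_amp_pow_mul_amp_pow (isPrimitiveRoot_exp_pi_mul_I_div (by omega)) hk hkN hk'N]
  split_ifs
  · rw [exp_pow_add_inv]
    congr 1
    linear_combination ((N : ℂ) * Real.cos (Real.pi * k / N)) * I_sq
  · simp

theorem ηcoef_neg (N : ℕ) (n : ℤ) : ηcoef N (-n) = ηcoef N n := by
  simp only [ηcoef, neg_eq_zero, Int.cast_neg, mul_neg, neg_div, Real.sin_neg, div_neg, neg_neg]

theorem ηcoef_mul_self_mul_sin {n : ℤ} (hn : |n| < N) :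
    ηcoef N n * ηcoef N n * (N * Real.sin (Real.pi * n / N)) = n := by
  rcases eq_or_ne n 0 with rfl | hn0
  · simp
  have hNpos : (0 : ℝ) < N := by exact_mod_cast (abs_nonneg n).trans_lt hn
  have hx : |Real.pi * n / N| < Real.pi := by
    rw [abs_div, abs_mul, abs_of_pos Real.pi_pos, abs_of_pos hNpos, div_lt_iff₀ hNpos]
    exact mul_lt_mul_of_pos_left (by exact_mod_cast hn) Real.pi_pos
  obtain ⟨hr, hs⟩ : 0 ≤ (n : ℝ) / (N * Real.sin (Real.pi * n / N)) ∧
      Real.sin (Real.pi * n / N) ≠ 0 := by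
    rcases lt_or_gt_of_ne hn0 with hneg | hpos
    · have hs := Real.sin_neg_of_neg_of_neg_pi_lt
        (div_neg_of_neg_of_pos (mul_neg_of_pos_of_neg Real.pi_pos (by exact_mod_cast hneg)) hNpos)
        (neg_lt_of_abs_lt hx)
      exact ⟨div_nonneg_of_nonpos (by exact_mod_cast hneg.le)
        (mul_nonpos_of_nonneg_of_nonpos hNpos.le hs.le), hs.ne⟩
    · have hs := Real.sin_pos_of_pos_of_lt_pi
        (div_pos (mul_pos Real.pi_pos (by exact_mod_cast hpos)) hNpos) (lt_of_abs_lt hx)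
      exact ⟨div_nonneg (by exact_mod_cast hpos.le) (mul_nonneg hNpos.le hs.le), hs.ne'⟩
  have key : √((n : ℝ) / (N * Real.sin (Real.pi * n / N)))
      * √((n : ℝ) / (N * Real.sin (Real.pi * n / N))) * (N * Real.sin (Real.pi * n / N)) = n := by
    rw [Real.mul_self_sqrt hr, div_mul_cancel₀ _ (mul_ne_zero hNpos.ne' hs)]
  rw [ηcoef, if_neg hn0]
  exact_mod_cast key

theorem ηp_anticomm_ηm (hev : Even N) {n n' : ℤ} (hn : -(N : ℤ) / 2 < n) (hnN : n < (N : ℤ) / 2)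
    (hn' : -(N : ℤ) / 2 < n') (hn'N : n' < (N : ℤ) / 2) :
    ηp N n * ηm N n' + ηm N n' * ηp N n = (if n + n' = 0 then (n : ℂ) else 0) • (1 : Op N) := by
  obtain ⟨M, rfl⟩ := hev
  have hk : ((((M + M : ℕ) : ℤ) / 2 + n).toNat : ℤ) = M + n := by omega
  rw [ηp, ηm, smul_mul_smul_comm, smul_mul_smul_comm, mul_comm (ηcoef _ n'), ← smul_add,
    θd_anticomm_θa (by omega) (by omega) (by omega), smul_smul]
  congr 1
  split_ifs with hkk hnn hnn
  · obtain rfl : n' = -n := by omega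
    have hcos : Real.cos (Real.pi * ((((M + M : ℕ) : ℤ) / 2 + n).toNat : ℕ) / (M + M : ℕ))
        = -Real.sin (Real.pi * n / (M + M : ℕ)) := by
      rw [← Real.cos_add_pi_div_two]
      congr 1
      rw [show ((((((M + M : ℕ) : ℤ) / 2 + n).toNat : ℕ) : ℝ)) = M + n by exact_mod_cast hk]
      have : (M : ℝ) ≠ 0 := by exact_mod_cast (show M ≠ 0 by omega)
      push_cast
      field_simp
      ring
    simp only [ηcoef_neg, hcos, ofReal_neg, mul_neg, neg_neg]
    exact ηcoef_mul_self_mul_sin (abs_lt.2 ⟨by omega, by omega⟩)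
  · omega
  · omega
  · rw [mul_zero]

theorem Afun_half (hev : Even N) (hN : N ≠ 0) (j : ℕ) : Afun N (N / 2) j = I ^ j := by
  obtain ⟨M, rfl⟩ := hev
  have hI : exp (Real.pi * I / (M + M : ℕ)) ^ ((M + M) / 2) = I := by
    have hM : (M : ℂ) ≠ 0 := by exact_mod_cast (show M ≠ 0 by omega)
    rw [← exp_nat_mul, show (M + M) / 2 = M by omega]
    convert exp_pi_div_two_mul_I using 2
    push_cast
    field_simp
    ring
  rw [Afun_eq_amp, hI, amp, inv_I]
  linear_combination (-(I ^ j + (-I) ^ j) / 2) * I_sq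

theorem sum_neg_one_pow_mul (c : ℂ) (M : ℕ) :
    ∑ j ∈ range (2 * M), (-1 : ℂ) ^ (j + 1) * (c - (j + 1) + (1 - (-1 : ℂ) ^ (j + 1)) / 2)
      = -(2 * M) := by
  induction M with
  | zero => simp
  | succ m ih =>
    rw [show 2 * (m + 1) = 2 * m + 1 + 1 by ring, sum_range_succ, sum_range_succ, ih]
    simp only [pow_succ, pow_mul]
    push_cast
    ring

theorem sum_Afun_half_mul_γcoef (hev : Even N) (hN : N ≠ 0) :
    ∑ j ∈ range N, Afun N (N / 2) (j + 1) * γcoef N (j + 1) = -N := by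
  have hterm : ∀ j, Afun N (N / 2) (j + 1) * γcoef N (j + 1)
      = (-1 : ℂ) ^ (j + 1) * (N / 2 - (j + 1) + (1 - (-1 : ℂ) ^ (j + 1)) / 2) := fun j => by
    have hI : I ^ (j + 1) * I ^ (j + 1) = (-1) ^ (j + 1) := by rw [← mul_pow, I_mul_I]
    rw [Afun_half hev hN, γcoef]
    push_cast
    linear_combination (N / 2 - (j + 1) + (1 - (-1 : ℂ) ^ (j + 1)) / 2) * hI
  obtain ⟨M, rfl⟩ := hev
  rw [sum_congr rfl fun j _ => hterm j, ← two_mul, sum_neg_one_pow_mul]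
  push_cast
  ring

theorem ηp_zero_anticomm_γm (hev : Even N) (hN : N ≠ 0) : ηp N 0 * γm N + γm N * ηp N 0 = 1 := by
  have hη : ηp N 0 = (√Real.pi : ℂ)⁻¹ • θd N (N / 2) := by
    rw [ηp, ηcoef, if_pos rfl, show ((N : ℤ) / 2 + 0).toNat = N / 2 by omega, ofReal_inv]
  have hπ : (√Real.pi : ℂ) ≠ 0 := ofReal_ne_zero.2 (Real.sqrt_ne_zero'.2 Real.pi_pos)
  rw [hη, γm, θd, smul_mul_smul_comm, smul_mul_smul_comm, mul_comm (-(_ / _)), ← smul_add,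
    sum_smul_ad_anticomm_sum_smul_an, sum_Afun_half_mul_γcoef hev hN, smul_smul]
  convert one_smul ℂ (1 : Op N)
  field_simp

theorem ηm_zero_anticomm_γp (hev : Even N) (hN : N ≠ 0) :
    ηm N 0 * γp N + γp N * ηm N 0 = -1 := by
  have hη : ηm N 0 = ((√Real.pi : ℂ)⁻¹ * -I) • ∑ j ∈ range N, Afun N (N / 2) (j + 1) • an N j := by
    rw [ηm, ηcoef, if_pos rfl, show ((N : ℤ) / 2 - 0).toNat = N / 2 by omega, ofReal_inv, θa,
      smul_smul]
  have hπ : (√Real.pi : ℂ) ≠ 0 := ofReal_ne_zero.2 (Real.sqrt_ne_zero'.2 Real.pi_pos)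
  rw [hη, γp, smul_mul_smul_comm, smul_mul_smul_comm, mul_comm (I * _ / _), ← smul_add, add_comm,
    sum_smul_ad_anticomm_sum_smul_an]
  simp only [mul_comm (γcoef _ _)]
  rw [sum_Afun_half_mul_γcoef hev hN, smul_smul, ← neg_one_smul ℂ (1 : Op N)]
  congr 1
  field_simp
  linear_combination I_sq

end LatticeW

/-- anticommutation relations of the rescaled modes `η^±_n` and `γ^±`. -/
theorem LatticeW.eta_anticomm (N : ℕ) (hN : 2 ≤ N) (hev : Even N) :
    (∀ n n' : ℤ, -(N : ℤ)/2 < n → n < (N : ℤ)/2 → -(N : ℤ)/2 < n' → n' < (N : ℤ)/2 →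
      ηp N n * ηm N n' + ηm N n' * ηp N n
        = (if n + n' = 0 then (n : ℂ) else 0) • (1 : Op N)) ∧
    ηp N 0 * γm N + γm N * ηp N 0 = 1 ∧
    ηm N 0 * γp N + γp N * ηm N 0 = -1 :=
  ⟨fun _ _ hn hnN hn' hn'N => LatticeW.ηp_anticomm_ηm hev hn hnN hn' hn'N,
    LatticeW.ηp_zero_anticomm_γm hev (by omega), LatticeW.ηm_zero_anticomm_γp hev (by omega)⟩
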